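/- arXiv:1406.4679 — 2 statements merged into one kernel-verified Lean document; each statement's English description precedes it below -/
import Mathlib

section
/- Let k ≥ 2, let A and B be finite relational structures over the same vocabulary, and let p be a partial map from V(A) to V(B) with |p| ≤ k. If p has a CSP-derivation of width at most k−1 and depth at most i, then Spoiler has a strategy to win the existential k-pebble game on A and B within i rounds starting from the position p. -/
/-- A relational structure over the vocabulary `ι` (a type of relation symbols)
with universe `V`: each relation symbol is interpreted as a set of tuples
(lists) over `V`. -/
structure RelStruct (ι V : Type) where
  rel : ι → List V → Prop

namespace CSP

variable {ι α β : Type}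

/-- A finite set of pairs is a partial map if it is functional. -/
def Functional (p : Finset (α × β)) : Prop :=
  ∀ ⦃x : α⦄ ⦃y y' : β⦄, (x, y) ∈ p → (x, y') ∈ p → y = y'

/-- `p` is a partial homomorphism from `A` to `B`: it is a partial map, and every
tuple of elements of its domain that belongs to a relation of `A` is mapped
coordinatewise to a tuple of the corresponding relation of `B`. -/
def PartialHom (A : RelStruct ι α) (B : RelStruct ι β) (p : Finset (α × β)) : Prop :=
  Functional p ∧
  ∀ (R : ι) (t : List α) (t' : List β),
    List.Forall₂ (fun x y => (x, y) ∈ p) t t' → A.rel R t → B.rel R t'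

/-- A structure is binary if all of its relations consist of tuples of arity at most 2. -/
def Binary (A : RelStruct ι α) : Prop := ∀ R t, A.rel R t → t.length ≤ 2

/-- `Deriv A B w p d` holds iff the partial map `p` has a CSP-derivation of width at
most `w` and depth at most `d`: axioms are the partial maps that are not partial
homomorphisms (of any depth), and a non-axiom line `p` with `|p| ≤ w` may be derived
from the premises `p'_b ∪ {x ↦ b}` (for all `b ∈ V(B)`), where each `p'_b ⊆ p`,
increasing the depth by one. -/
inductive Deriv [DecidableEq α] [DecidableEq β]
    (A : RelStruct ι α) (B : RelStruct ι β) (w : ℕ) :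
    Finset (α × β) → ℕ → Prop
  | ax {p : Finset (α × β)} {d : ℕ} :
      Functional p → ¬ PartialHom A B p → Deriv A B w p d
  | rule {p : Finset (α × β)} {d : ℕ} (x : α) (prem : β → Finset (α × β)) :
      Functional p → p.card ≤ w →
      (∀ b : β, prem b ⊆ p) →
      (∀ b : β, Deriv A B w (insert (x, b) (prem b)) d) →
      Deriv A B w p (d + 1)

end CSP

namespace CSP

variable {ι α β : Type}

/-- `SpoilerWin A B k p d`: Spoiler has a strategy to win the existential `k`-pebble game
on `A` and `B` within `d` rounds (pebble placements), starting from position `p`.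
Either the current position is already not a partial homomorphism, or Spoiler picks up
some pebbles (keeping `p' ⊆ p` with `|p'| < k`), places a free pebble on some `x ∈ V(A)`,
and wins within the remaining rounds against every answer `b ∈ V(B)` of Duplicator. -/
inductive SpoilerWin [DecidableEq α] [DecidableEq β]
    (A : RelStruct ι α) (B : RelStruct ι β) (k : ℕ) :
    Finset (α × β) → ℕ → Prop
  | win {p : Finset (α × β)} {d : ℕ} :
      ¬ PartialHom A B p → SpoilerWin A B k p d
  | move {p : Finset (α × β)} {d : ℕ} (p' : Finset (α × β)) (x : α) :
      p' ⊆ p → p'.card < k →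
      (∀ b : β, SpoilerWin A B k (insert (x, b) p') d) →
      SpoilerWin A B k p (d + 1)

end CSP

/-!
Spoiler replays the derivation from its conclusion upwards. At a line `p` obtained by the rule
at `x`, he keeps all of `p` on the board (at most `k - 1` pebbles, by the width bound) and pebbles
`x`; whatever Duplicator answers with `b`, the new position contains the premise
`p'_b ∪ {x ↦ b}`. Winning positions are closed under supersets, since partial homomorphisms are
closed under subsets, so induction on the derivation gives the win within its depth.
-/

namespace CSP

variable {ι α β : Type} {A : RelStruct ι α} {B : RelStruct ι β}

theorem PartialHom.of_subset {p q : Finset (α × β)} (h : PartialHom A B p) (hqp : q ⊆ p) :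
    PartialHom A B q :=
  ⟨fun _ _ _ hy hy' => h.1 (hqp hy) (hqp hy'),
    fun R t t' ht => h.2 R t t' (ht.imp fun _ _ hxy => hqp hxy)⟩

variable [DecidableEq α] [DecidableEq β] {k : ℕ}

theorem SpoilerWin.mono {p q : Finset (α × β)} {d : ℕ} (h : SpoilerWin A B k q d)
    (hqp : q ⊆ p) : SpoilerWin A B k p d := by
  cases h with
  | win hq => exact .win fun hp => hq (hp.of_subset hqp)
  | move p' x hsub hcard hwin => exact .move p' x (hsub.trans hqp) hcard hwin

theorem Deriv.spoilerWin {w : ℕ} {p : Finset (α × β)} {d : ℕ} (h : Deriv A B w p d)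
    (hw : w < k) : SpoilerWin A B k p d := by
  induction h with
  | ax _ hp => exact .win hp
  | rule x _ _ hcard hsub _ ih =>
    exact .move _ x subset_rfl (hcard.trans_lt hw) fun b =>
      (ih b).mono (Finset.insert_subset_insert _ (hsub b))

end CSP

theorem csp_derivation_to_spoiler_win_general
    {ι α β : Type} [DecidableEq α] [DecidableEq β]
    (k i : ℕ) (hk : 2 ≤ k) (A : RelStruct ι α) (B : RelStruct ι β)
    (p : Finset (α × β))
    (hderiv : CSP.Deriv A B (k - 1) p i) :
    CSP.SpoilerWin A B k p i :=
  hderiv.spoilerWin (by omega)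

/-- if the partial map `p` (with `|p| ≤ k`) has a CSP-derivation of width
at most `k-1` and depth at most `i`, then Spoiler has a strategy to win the existential
`k`-pebble game on `A` and `B` within `i` rounds starting from the position `p`. -/
theorem csp_derivation_to_spoiler_win
    {ι α β : Type} [DecidableEq α] [DecidableEq β] [Fintype α] [Fintype β]
    (k i : ℕ) (hk : 2 ≤ k) (A : RelStruct ι α) (B : RelStruct ι β)
    (p : Finset (α × β)) (hfun : CSP.Functional p) (hcard : p.card ≤ k)
    (hderiv : CSP.Deriv A B (k - 1) p i) :
    CSP.SpoilerWin A B k p i :=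
  csp_derivation_to_spoiler_win_general k i hk A B p hderiv
end

section
/- Let k ≥ 2, n, m ≥ 1, ℓ ∈ [k], and let q be a configuration to which the left increment gadget INC^left_ℓ is applicable. Then in the existential (k+1)-pebble game on INC^left_ℓ, Spoiler can reach the position 'q^+ on y' (on the output block) from the position 'q on x' (on the input block). -/
/-- A vertex-colored (finite simple) graph on vertex type `V` with colors in `C`. -/
structure ColoredGraph (V : Type) (C : Type) where
  graph : SimpleGraph V
  color : V → C

namespace PebbleCG

variable {α β C : Type}

/-- A finite set of pairs is a partial map if it is functional. -/
def Functional (p : Finset (α × β)) : Prop :=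
  ∀ ⦃x : α⦄ ⦃y y' : β⦄, (x, y) ∈ p → (x, y') ∈ p → y = y'

/-- `p` is a partial homomorphism between the vertex-colored graphs `A` and `B`:
a partial map that preserves colors and maps edges to edges. -/
def PartialHom (A : ColoredGraph α C) (B : ColoredGraph β C) (p : Finset (α × β)) : Prop :=
  Functional p ∧
  (∀ ⦃x y⦄, (x, y) ∈ p → B.color y = A.color x) ∧
  (∀ ⦃x y x' y'⦄, (x, y) ∈ p → (x', y') ∈ p → A.graph.Adj x x' → B.graph.Adj y y')

/-- Spoiler wins the existential `K`-pebble game played on the vertex sets `S` of `A`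
and `D` of `B`, starting from position `p` (after finitely many rounds): either the
position is already not a partial homomorphism, or Spoiler can pick up pebbles and place
a free pebble on some `x ∈ S` so that he wins against every answer `b ∈ D`. -/
inductive SpoilerWins [DecidableEq α] [DecidableEq β]
    (A : ColoredGraph α C) (B : ColoredGraph β C)
    (S : Set α) (D : Set β) (K : ℕ) : Finset (α × β) → Prop
  | win {p : Finset (α × β)} :
      ¬ PartialHom A B p → SpoilerWins A B S D K p
  | move {p : Finset (α × β)} (p' : Finset (α × β)) (x : α) :
      p' ⊆ p → p'.card < K → x ∈ S →
      (∀ b ∈ D, SpoilerWins A B S D K (insert (x, b) p')) →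
      SpoilerWins A B S D K p

/-- `SpoilerReach A B S D K p q`: starting from position `p`, Spoiler has a strategy in
the existential `K`-pebble game (played on the vertex sets `S` and `D`) guaranteeing
that after finitely many rounds he has either won or reached exactly the position `q`. -/
inductive SpoilerReach [DecidableEq α] [DecidableEq β]
    (A : ColoredGraph α C) (B : ColoredGraph β C)
    (S : Set α) (D : Set β) (K : ℕ) : Finset (α × β) → Finset (α × β) → Prop
  | refl {p : Finset (α × β)} : SpoilerReach A B S D K p p
  | win {p q : Finset (α × β)} :
      ¬ PartialHom A B p → SpoilerReach A B S D K p q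
  | move {p q : Finset (α × β)} (p' : Finset (α × β)) (x : α) :
      p' ⊆ p → p'.card < K → x ∈ S →
      (∀ b ∈ D, SpoilerReach A B S D K (insert (x, b) p') q) →
      SpoilerReach A B S D K p q

/-- `H` together with the set `crit ⊆ H` of critical positions is a critical strategy
for Duplicator in the existential `K`-pebble game on the vertex-colored graphs `A`
(restricted to `S`) and `B` (restricted to `D`).  If `crit = ∅` it is a winning
strategy. -/
structure IsCriticalStrategy [DecidableEq α] [DecidableEq β]
    (A : ColoredGraph α C) (B : ColoredGraph β C)
    (S : Set α) (D : Set β) (K : ℕ)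
    (H crit : Set (Finset (α × β))) : Prop where
  nonempty : H.Nonempty
  crit_subset : crit ⊆ H
  mem_SD : ∀ p ∈ H, ∀ z ∈ p, Prod.fst z ∈ S ∧ Prod.snd z ∈ D
  isHom : ∀ p ∈ H, PartialHom A B p
  crit_card : ∀ p ∈ crit, p.card = K - 1
  downward : ∀ p ∈ H, ∀ q ⊆ p, q ∈ H
  extend : ∀ g ∈ H, g ∉ crit → g.card < K → ∀ x ∈ S, ∃ b ∈ D, insert (x, b) g ∈ H

/-- The family `H` of positions has boundary function `f` on the (Spoiler-side) boundary
`bS`: every position of `H` agrees with `f` on boundary vertices in its domain. -/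
def HasBoundaryFun (H : Set (Finset (α × β))) (bS : Set α) (f : α → β) : Prop :=
  ∀ h ∈ H, ∀ z ∈ bS, ∀ y : β, (z, y) ∈ h → y = f z

end PebbleCG

/-! ### Blocks of vertices with two labels (input `x` = label `0`, output `y` = label `1`).

A vertex `(lab, i, j)` is the vertex `x^i_j` (if `lab = 0`) or `y^i_j` (if `lab = 1`).
On Spoiler's side `i ∈ [1,k]`, `j ∈ [1,n]`; on Duplicator's side `i ∈ [1,k]`,
`0 ≤ j ≤ m` (with `j = 0` the special vertex).  The color of `(lab, i, j)` is
`(lab, i)`, so blocks are colored per block, matched between the two sides. -/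

/-- Spoiler's vertex set: input and output blocks. -/
def blkSetS (k n : ℕ) : Set (ℕ × ℕ × ℕ) :=
  {v | v.1 ≤ 1 ∧ 1 ≤ v.2.1 ∧ v.2.1 ≤ k ∧ 1 ≤ v.2.2 ∧ v.2.2 ≤ n}

/-- Duplicator's vertex set: input and output blocks (including the special vertices). -/
def blkSetD (k m : ℕ) : Set (ℕ × ℕ × ℕ) :=
  {v | v.1 ≤ 1 ∧ 1 ≤ v.2.1 ∧ v.2.1 ≤ k ∧ v.2.2 ≤ m}

/-- The Spoiler-side input boundary: the vertices `x^i_j`, `i ∈ [1,k]`, `j ∈ [1,n]`. -/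
def blkBdryX (k n : ℕ) : Set (ℕ × ℕ × ℕ) :=
  {v | v.1 = 0 ∧ 1 ≤ v.2.1 ∧ v.2.1 ≤ k ∧ 1 ≤ v.2.2 ∧ v.2.2 ≤ n}

/-- The Spoiler-side output boundary: the vertices `y^i_j`, `i ∈ [1,k]`, `j ∈ [1,n]`. -/
def blkBdryY (k n : ℕ) : Set (ℕ × ℕ × ℕ) :=
  {v | v.1 = 1 ∧ 1 ≤ v.2.1 ∧ v.2.1 ≤ k ∧ 1 ≤ v.2.2 ∧ v.2.2 ≤ n}

open Classical in
/-- The map `h^x_q` (resp. `h^y_q`) for a configuration `q = (a, b, T)`, acting on a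
labelled block: it sends `x^i_{a(i)}` to `x^i_{b(i)}` for `i ∉ T`, and every other
`x^i_j` to the special vertex `x^i_0` (and likewise on `y`-blocks). -/
noncomputable def hBlk (a b : ℕ → ℕ) (T : Set ℕ) : ℕ × ℕ × ℕ → ℕ × ℕ × ℕ :=
  fun v => if v.2.2 = a v.2.1 ∧ v.2.1 ∉ T then (v.1, v.2.1, b v.2.1) else (v.1, v.2.1, 0)

/-! ### The left increment gadget `INC^left_ℓ`. -/

/-- Spoiler's side of the left increment gadget `INC^left_ℓ`: edges `{x^i_j, y^i_j}` for
`i < ℓ`, `j ∈ [1,n]`; `{x^ℓ_j, y^ℓ_{j+1}}` for `1 ≤ j ≤ n-1`; and `{x^i_n, y^i_1}` for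
`i > ℓ`. -/
def incLeftS (k n ℓ : ℕ) : ColoredGraph (ℕ × ℕ × ℕ) (ℕ × ℕ) where
  graph := SimpleGraph.fromRel (fun u v =>
    ∃ i j j', 1 ≤ i ∧ i ≤ k ∧ 1 ≤ j ∧ j ≤ n ∧ 1 ≤ j' ∧ j' ≤ n ∧
      u = (0, i, j) ∧ v = (1, i, j') ∧
      ((i < ℓ ∧ j' = j) ∨ (i = ℓ ∧ j < n ∧ j' = j + 1) ∨ (ℓ < i ∧ j = n ∧ j' = 1)))
  color := fun v => (v.1, v.2.1)

/-- Duplicator's side of the left increment gadget: in every block `i ∈ [1,k]` the edges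
`{x^i_m, y^i_1}` and `{x^i_j, y^i_0}` for `0 ≤ j ≤ m-1`. -/
def incLeftD (k m : ℕ) : ColoredGraph (ℕ × ℕ × ℕ) (ℕ × ℕ) where
  graph := SimpleGraph.fromRel (fun u v =>
    ∃ i j j', 1 ≤ i ∧ i ≤ k ∧ u = (0, i, j) ∧ v = (1, i, j') ∧ j ≤ m ∧
      ((j = m ∧ j' = 1) ∨ (j < m ∧ j' = 0)))
  color := fun v => (v.1, v.2.1)

/-- `INC^left_ℓ` is applicable to the valid configuration `(a, b, ∅)`:
`a(ℓ) < n`, `a(i) = n` for all `i > ℓ`, and `b(i) = m` for all `i ∈ [1,k]`. -/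
def incLeftApplicable (k n m ℓ : ℕ) (a b : ℕ → ℕ) : Prop :=
  a ℓ < n ∧ (∀ i, ℓ < i → i ≤ k → a i = n) ∧ (∀ i, 1 ≤ i → i ≤ k → b i = m)

/-- The `a`-part of the successor configuration `q⁺` for `INC^left_ℓ`
(its `b`-part is constantly `1`). -/
def incLeftSucc (a : ℕ → ℕ) (ℓ : ℕ) : ℕ → ℕ :=
  fun i => if i < ℓ then a i else if i = ℓ then a i + 1 else 1

namespace PebbleCG

variable {α β C : Type} [DecidableEq α] [DecidableEq β]
  {A : ColoredGraph α C} {B : ColoredGraph β C} {S : Set α} {D : Set β} {K : ℕ}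
  {p p' q r : Finset (α × β)} {x : α} {y : β}

theorem SpoilerReach.trans (hpq : SpoilerReach A B S D K p q)
    (hqr : SpoilerReach A B S D K q r) : SpoilerReach A B S D K p r := by
  induction hpq with
  | refl => exact hqr
  | win hlose => exact .win hlose
  | move p' x hsub hcard hx _ ih => exact .move p' x hsub hcard hx fun b hb => ih b hb hqr

theorem SpoilerReach.of_forced_answer (hsub : p' ⊆ p) (hcard : p'.card < K) (hx : x ∈ S)
    (hforced : ∀ b ∈ D, PartialHom A B (insert (x, b) p') → b = y)
    (hreach : SpoilerReach A B S D K (insert (x, y) p') q) : SpoilerReach A B S D K p q := by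
  refine .move p' x hsub hcard hx fun b hb => ?_
  by_cases hhom : PartialHom A B (insert (x, b) p')
  · rwa [hforced b hb hhom]
  · exact .win hhom

/-- Spoiler re-places a pebble of `q`; functionality forces Duplicator to answer as before. -/
theorem SpoilerReach.of_subset (hqp : q ⊆ p) (hxy : (x, y) ∈ q) (hx : x ∈ S)
    (hcard : q.card < K) : SpoilerReach A B S D K p q :=
  .of_forced_answer hqp hcard hx
    (fun _ _ hhom => hhom.1 (Finset.mem_insert_self _ _) (Finset.mem_insert_of_mem hxy))
    (by rw [Finset.insert_eq_of_mem hxy]; exact .refl)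

end PebbleCG

section IncLeft

variable {k n m ℓ i t : ℕ} {a b : ℕ → ℕ}

theorem incLeftSucc_bounds
    (hwf : ∀ i, 1 ≤ i → i ≤ k → 1 ≤ a i ∧ a i ≤ n ∧ 1 ≤ b i ∧ b i ≤ m)
    (happ : incLeftApplicable k n m ℓ a b) (hi1 : 1 ≤ i) (hik : i ≤ k) :
    1 ≤ incLeftSucc a ℓ i ∧ incLeftSucc a ℓ i ≤ n := by
  have := hwf i hi1 hik
  have := happ.1
  unfold incLeftSucc
  split_ifs with hlt heq
  · omega
  · subst heq; omega
  · omega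

theorem incLeftS_adj_succ
    (hwf : ∀ i, 1 ≤ i → i ≤ k → 1 ≤ a i ∧ a i ≤ n ∧ 1 ≤ b i ∧ b i ≤ m)
    (happ : incLeftApplicable k n m ℓ a b) (hi1 : 1 ≤ i) (hik : i ≤ k) :
    (incLeftS k n ℓ).graph.Adj (0, i, a i) (1, i, incLeftSucc a ℓ i) := by
  have ha := hwf i hi1 hik
  have hs := incLeftSucc_bounds hwf happ hi1 hik
  rw [incLeftS, SimpleGraph.fromRel_adj]
  refine ⟨by simp, Or.inl ⟨i, a i, _, hi1, hik, ha.1, ha.2.1, hs.1, hs.2, rfl, rfl, ?_⟩⟩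
  unfold incLeftSucc
  rcases lt_trichotomy i ℓ with hlt | rfl | hgt
  · exact Or.inl ⟨hlt, by simp [hlt]⟩
  · exact Or.inr (Or.inl ⟨rfl, happ.1, by simp⟩)
  · exact Or.inr (Or.inr ⟨hgt, happ.2.1 i hgt hik, by simp [hgt.not_gt, hgt.ne']⟩)

theorem eq_one_of_incLeftD_adj {j : ℕ} (hadj : (incLeftD k m).graph.Adj (0, i, m) (1, i, j)) :
    j = 1 := by
  rw [incLeftD, SimpleGraph.fromRel_adj] at hadj
  obtain ⟨-, h | h⟩ := hadj <;> simp only [Prod.mk.injEq] at h <;> omega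

def incLeftPos (k ℓ : ℕ) (a b : ℕ → ℕ) (t : ℕ) : Finset ((ℕ × ℕ × ℕ) × (ℕ × ℕ × ℕ)) :=
  (Finset.Icc 1 k).image fun i =>
    if i ≤ t then ((1, i, incLeftSucc a ℓ i), (1, i, 1)) else ((0, i, a i), (0, i, b i))

theorem card_incLeftPos_lt : (incLeftPos k ℓ a b t).card < k + 1 :=
  Nat.lt_succ_of_le (Finset.card_image_le.trans (by simp))

theorem output_mem_incLeftPos (hi1 : 1 ≤ i) (hit : i ≤ t) (hik : i ≤ k) :
    ((1, i, incLeftSucc a ℓ i), (1, i, 1)) ∈ incLeftPos k ℓ a b t :=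
  Finset.mem_image.2 ⟨i, Finset.mem_Icc.2 ⟨hi1, hik⟩, if_pos hit⟩

theorem input_mem_incLeftPos (hti : t < i) (hik : i ≤ k) :
    ((0, i, a i), (0, i, b i)) ∈ incLeftPos k ℓ a b t :=
  Finset.mem_image.2 ⟨i, Finset.mem_Icc.2 ⟨by omega, hik⟩, if_neg (Nat.not_le_of_lt hti)⟩

theorem incLeftPos_succ_subset :
    incLeftPos k ℓ a b (t + 1) ⊆
      insert ((1, t + 1, incLeftSucc a ℓ (t + 1)), (1, t + 1, 1)) (incLeftPos k ℓ a b t) := by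
  intro z hz
  obtain ⟨i, hi, rfl⟩ := Finset.mem_image.1 hz
  obtain ⟨hi1, hik⟩ := Finset.mem_Icc.1 hi
  rcases lt_trichotomy i (t + 1) with hlt | rfl | hgt
  · rw [if_pos hlt.le]
    exact Finset.mem_insert_of_mem (output_mem_incLeftPos hi1 (Nat.le_of_lt_succ hlt) hik)
  · simp
  · rw [if_neg hgt.not_ge]
    exact Finset.mem_insert_of_mem (input_mem_incLeftPos (Nat.lt_of_succ_lt hgt) hik)

/-- One round: Spoiler pebbles `y^i_{a⁺(i)}` for `i = t + 1`.  Since `x^i_{a(i)}` is pebbled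
on `x^i_m` and `x^i_m` is adjacent only to `y^i_1` among the `y^i`, Duplicator must answer
`y^i_1`; then Spoiler drops the pebble on `x^i`. -/
theorem spoilerReach_incLeftPos_succ
    (hwf : ∀ i, 1 ≤ i → i ≤ k → 1 ≤ a i ∧ a i ≤ n ∧ 1 ≤ b i ∧ b i ≤ m)
    (happ : incLeftApplicable k n m ℓ a b) (ht : t + 1 ≤ k) :
    PebbleCG.SpoilerReach (incLeftS k n ℓ) (incLeftD k m) (blkSetS k n) (blkSetD k m) (k + 1)
      (incLeftPos k ℓ a b t) (incLeftPos k ℓ a b (t + 1)) := by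
  have hi1 : 1 ≤ t + 1 := Nat.le_add_left 1 t
  have hyS : ((1, t + 1, incLeftSucc a ℓ (t + 1)) : ℕ × ℕ × ℕ) ∈ blkSetS k n :=
    ⟨le_rfl, hi1, ht, incLeftSucc_bounds hwf happ hi1 ht⟩
  refine .of_forced_answer subset_rfl card_incLeftPos_lt hyS ?_
    (.of_subset incLeftPos_succ_subset (output_mem_incLeftPos hi1 le_rfl ht) hyS
      card_incLeftPos_lt)
  rintro ⟨d₁, d₂, d₃⟩ - ⟨-, hcolor, hedge⟩
  have hx : ((0, t + 1, a (t + 1)), (0, t + 1, m)) ∈ incLeftPos k ℓ a b t :=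
    happ.2.2 (t + 1) hi1 ht ▸ input_mem_incLeftPos t.lt_succ_self ht
  obtain ⟨rfl, rfl⟩ : d₁ = 1 ∧ d₂ = t + 1 := by
    simpa [incLeftS, incLeftD] using hcolor (Finset.mem_insert_self _ _)
  rw [eq_one_of_incLeftD_adj (hedge (Finset.mem_insert_of_mem hx)
    (Finset.mem_insert_self _ _) (incLeftS_adj_succ hwf happ hi1 ht))]

theorem spoilerReach_incLeftPos
    (hwf : ∀ i, 1 ≤ i → i ≤ k → 1 ≤ a i ∧ a i ≤ n ∧ 1 ≤ b i ∧ b i ≤ m)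
    (happ : incLeftApplicable k n m ℓ a b) (ht : t ≤ k) :
    PebbleCG.SpoilerReach (incLeftS k n ℓ) (incLeftD k m) (blkSetS k n) (blkSetD k m) (k + 1)
      (incLeftPos k ℓ a b 0) (incLeftPos k ℓ a b t) := by
  induction t with
  | zero => exact .refl
  | succ t ih => exact (ih (by omega)).trans (spoilerReach_incLeftPos_succ hwf happ ht)

end IncLeft

theorem spoiler_reach_inc_left_general (k n m ℓ : ℕ) (a b : ℕ → ℕ)
    (hwf : ∀ i, 1 ≤ i → i ≤ k → 1 ≤ a i ∧ a i ≤ n ∧ 1 ≤ b i ∧ b i ≤ m)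
    (happ : incLeftApplicable k n m ℓ a b) :
    PebbleCG.SpoilerReach (incLeftS k n ℓ) (incLeftD k m) (blkSetS k n) (blkSetD k m)
      (k + 1)
      ((Finset.Icc 1 k).image fun i => ((0, i, a i), (0, i, b i)))
      ((Finset.Icc 1 k).image fun i => ((1, i, incLeftSucc a ℓ i), (1, i, 1))) := by
  have hstart :
      incLeftPos k ℓ a b 0 = (Finset.Icc 1 k).image fun i => ((0, i, a i), (0, i, b i)) :=
    Finset.image_congr fun i hi => by simp [Nat.one_le_iff_ne_zero.1 (Finset.mem_Icc.1 hi).1]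
  have hend : incLeftPos k ℓ a b k =
      (Finset.Icc 1 k).image fun i => ((1, i, incLeftSucc a ℓ i), (1, i, 1)) :=
    Finset.image_congr fun i hi => by simp [(Finset.mem_Icc.1 hi).2]
  rw [← hstart, ← hend]
  exact spoilerReach_incLeftPos hwf happ le_rfl

/-- if `INC^left_ℓ` is applicable to the valid configuration `q = (a,b,∅)`,
then Spoiler can reach the position `q⁺ on y` from the position `q on x` in the
existential `(k+1)`-pebble game on `INC^left_ℓ`. -/
theorem spoiler_reach_inc_left (k n m ℓ : ℕ) (hk : 2 ≤ k) (hn : 1 ≤ n) (hm : 1 ≤ m)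
    (hℓ1 : 1 ≤ ℓ) (hℓk : ℓ ≤ k) (a b : ℕ → ℕ)
    (hwf : ∀ i, 1 ≤ i → i ≤ k → 1 ≤ a i ∧ a i ≤ n ∧ 1 ≤ b i ∧ b i ≤ m)
    (happ : incLeftApplicable k n m ℓ a b) :
    PebbleCG.SpoilerReach (incLeftS k n ℓ) (incLeftD k m) (blkSetS k n) (blkSetD k m)
      (k + 1)
      ((Finset.Icc 1 k).image fun i => ((0, i, a i), (0, i, b i)))
      ((Finset.Icc 1 k).image fun i => ((1, i, incLeftSucc a ℓ i), (1, i, 1))) :=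
  spoiler_reach_inc_left_general k n m ℓ a b hwf happ
end
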